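/- Let S be a 0-F-inverse semigroup and e, f ∈ E(S) ∖ {0}. Then there exists s ∈ S^× with s* s = e and s s* = f if and only if there exists a maximal element m of (S^×, ≤) with e ≤ m* m and m e m* = f. -/

import Mathlib

/-- An inverse semigroup structure on a semigroup with zero: `star s` is the unique
generalized inverse of `s`. -/
structure IsInvSemigroup (S : Type*) [SemigroupWithZero S] (star : S → S) : Prop where
  mul_star_mul : ∀ s : S, s * star s * s = s
  star_mul_star : ∀ s : S, star s * s * star s = star s
  star_unique : ∀ s t : S, s * t * s = s → t * s * t = t → t = star s

/-- `e` belongs to the semilattice of idempotents `E(S) = {s s* : s ∈ S}`. -/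
def IsIdemE {S : Type*} [SemigroupWithZero S] (star : S → S) (e : S) : Prop :=
  ∃ x : S, e = x * star x

/-- The natural partial order on an inverse semigroup: `s ≤ t` iff `s = e t` for some
idempotent `e`. -/
def natLe {S : Type*} [SemigroupWithZero S] (star : S → S) (s t : S) : Prop :=
  ∃ e : S, IsIdemE star e ∧ s = e * t

/-- `m` is a maximal element of `(S^×, ≤)`. -/
def IsMaxNonzero {S : Type*} [SemigroupWithZero S] (star : S → S) (m : S) : Prop :=
  m ≠ 0 ∧ ∀ t : S, t ≠ 0 → natLe star m t → t = m

/-- `S` is `0`-`F`-inverse: every nonzero element lies beneath a unique maximal element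
of `(S^×, ≤)`. -/
def ZeroFInverse {S : Type*} [SemigroupWithZero S] (star : S → S) : Prop :=
  ∀ s : S, s ≠ 0 → ∃! m : S, IsMaxNonzero star m ∧ natLe star s m

/-- A morphism (grading) `σ : S^× → G`: `σ(st) = σ(s)σ(t)` whenever `st ≠ 0`. -/
def IsGrading {S : Type*} [SemigroupWithZero S] {G : Type*} [Group G] (σ : S → G) : Prop :=
  ∀ s t : S, s ≠ 0 → t ≠ 0 → s * t ≠ 0 → σ (s * t) = σ s * σ t

/-!
Write `s = m e` with `m` the maximal element above `s` and `e = s* s`. Since idempotents commute,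
`(m e)* (m e) = e (m* m)` and `(m e)(m e)* = m e m*`, so `s* s = e` says exactly `e ≤ m* m`, and
`s s* = f` says `m e m* = f`. Conversely, for any `m` with `e ≤ m* m`, the element `m e` does the job.
-/

namespace IsInvSemigroup

variable {S : Type*} [SemigroupWithZero S] {star : S → S}

theorem star_star (hS : IsInvSemigroup S star) (s : S) : star (star s) = s :=
  (hS.star_unique (star s) s (hS.star_mul_star s) (hS.mul_star_mul s)).symm

theorem star_eq_self_of_isIdempotentElem (hS : IsInvSemigroup S star) {e : S}
    (he : IsIdempotentElem e) : star e = e :=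
  (hS.star_unique e e (by rw [he.eq, he.eq]) (by rw [he.eq, he.eq])).symm

theorem isIdempotentElem_mul_star (hS : IsInvSemigroup S star) (s : S) :
    IsIdempotentElem (s * star s) := by
  rw [isIdempotentElem_iff, ← mul_assoc, hS.mul_star_mul]

theorem isIdempotentElem_star_mul (hS : IsInvSemigroup S star) (s : S) :
    IsIdempotentElem (star s * s) := by
  rw [isIdempotentElem_iff, ← mul_assoc, hS.star_mul_star]

theorem isIdemE_iff (hS : IsInvSemigroup S star) {e : S} :
    IsIdemE star e ↔ IsIdempotentElem e := by
  constructor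
  · rintro ⟨x, rfl⟩
    exact hS.isIdempotentElem_mul_star x
  · intro he
    exact ⟨e, by rw [hS.star_eq_self_of_isIdempotentElem he, he.eq]⟩

theorem isIdempotentElem_mul (hS : IsInvSemigroup S star) {e f : S}
    (he : IsIdempotentElem e) (hf : IsIdempotentElem f) : IsIdempotentElem (e * f) := by
  set x := star (e * f)
  -- `f x e` is a second inverse of `e f`, hence equal to `x`; this makes `x` idempotent.
  have hfxe : f * x * e = x := by
    refine hS.star_unique (e * f) _ ?_ ?_
    · calc e * f * (f * x * e) * (e * f) = e * (f * f) * x * (e * e) * f := by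
            simp only [mul_assoc]
        _ = e * f * x * (e * f) := by rw [he.eq, hf.eq]; simp only [mul_assoc]
        _ = e * f := hS.mul_star_mul _
    · calc f * x * e * (e * f) * (f * x * e) = f * (x * (e * e) * (f * f) * x) * e := by
            simp only [mul_assoc]
        _ = f * (x * (e * f) * x) * e := by rw [he.eq, hf.eq]; simp only [mul_assoc]
        _ = f * x * e := by rw [hS.star_mul_star]
  have hx : IsIdempotentElem x :=
    calc x * x = f * x * e * (f * x * e) := by rw [hfxe]
      _ = f * (x * (e * f) * x) * e := by simp only [mul_assoc]
      _ = x := by rw [hS.star_mul_star, hfxe]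
  have hefx : e * f = x :=
    (hS.star_star (e * f)).symm.trans (hS.star_eq_self_of_isIdempotentElem hx)
  rw [hefx]
  exact hx

theorem commute_of_isIdempotentElem (hS : IsInvSemigroup S star) {e f : S}
    (he : IsIdempotentElem e) (hf : IsIdempotentElem f) : Commute e f := by
  have hinv : ∀ {a b : S}, IsIdempotentElem a → IsIdempotentElem b →
      a * b * (b * a) * (a * b) = a * b := fun {a b} ha hb =>
    calc a * b * (b * a) * (a * b) = a * (b * b) * (a * a) * b := by simp only [mul_assoc]
      _ = a * b * (a * b) := by rw [ha.eq, hb.eq]; simp only [mul_assoc]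
      _ = a * b := (hS.isIdempotentElem_mul ha hb).eq
  have hfe : f * e = star (e * f) := hS.star_unique _ _ (hinv he hf) (hinv hf he)
  change e * f = f * e
  rw [hfe, hS.star_eq_self_of_isIdempotentElem (hS.isIdempotentElem_mul he hf)]

theorem star_mul (hS : IsInvSemigroup S star) (s t : S) : star (s * t) = star t * star s := by
  have hc : Commute (t * star t) (star s * s) := hS.commute_of_isIdempotentElem
    (hS.isIdempotentElem_mul_star t) (hS.isIdempotentElem_star_mul s)
  refine (hS.star_unique _ _ ?_ ?_).symm
  · calc s * t * (star t * star s) * (s * t) = s * ((t * star t) * (star s * s)) * t := by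
          simp only [mul_assoc]
      _ = (s * star s * s) * (t * star t * t) := by rw [hc.eq]; simp only [mul_assoc]
      _ = s * t := by rw [hS.mul_star_mul, hS.mul_star_mul]
  · calc star t * star s * (s * t) * (star t * star s)
          = star t * ((star s * s) * (t * star t)) * star s := by simp only [mul_assoc]
      _ = (star t * t * star t) * (star s * s * star s) := by
          rw [← hc.eq]; simp only [mul_assoc]
      _ = star t * star s := by rw [hS.star_mul_star, hS.star_mul_star]

theorem eq_mul_star_mul_of_natLe (hS : IsInvSemigroup S star) {s t : S} (h : natLe star s t) :
    s = t * (star s * s) := by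
  obtain ⟨g, hg, rfl⟩ := h
  have hg' := hS.isIdemE_iff.1 hg
  calc g * t = g * (t * star t) * t := by rw [mul_assoc, hS.mul_star_mul]
    _ = t * star t * (g * g) * t := by
        rw [(hS.commute_of_isIdempotentElem hg' (hS.isIdempotentElem_mul_star t)).eq, hg'.eq]
    _ = t * (star (g * t) * (g * t)) := by
        rw [hS.star_mul, hS.star_eq_self_of_isIdempotentElem hg']; simp only [mul_assoc]

theorem natLe_iff_mul_eq_self (hS : IsInvSemigroup S star) {e f : S}
    (he : IsIdempotentElem e) (hf : IsIdempotentElem f) : natLe star e f ↔ e * f = e := by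
  constructor
  · rintro ⟨g, -, rfl⟩
    rw [mul_assoc, hf.eq]
  · intro h
    exact ⟨e, hS.isIdemE_iff.2 he, h.symm⟩

theorem star_mul_self_mul_idem (hS : IsInvSemigroup S star) (m : S) {e : S}
    (he : IsIdempotentElem e) : star (m * e) * (m * e) = e * (star m * m) := by
  rw [hS.star_mul, hS.star_eq_self_of_isIdempotentElem he]
  calc e * star m * (m * e) = e * ((star m * m) * e) := by simp only [mul_assoc]
    _ = e * (star m * m) := by
        rw [(hS.commute_of_isIdempotentElem (hS.isIdempotentElem_star_mul m) he).eq,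
          ← mul_assoc, he.eq]

theorem mul_idem_mul_star_self (hS : IsInvSemigroup S star) (m : S) {e : S}
    (he : IsIdempotentElem e) : m * e * star (m * e) = m * e * star m := by
  rw [hS.star_mul, hS.star_eq_self_of_isIdempotentElem he]
  calc m * e * (e * star m) = m * (e * e) * star m := by simp only [mul_assoc]
    _ = m * e * star m := by rw [he.eq]

end IsInvSemigroup

theorem stmt9_general {S : Type*} [SemigroupWithZero S] (star : S → S)
    (hinv : IsInvSemigroup S star) (hF : ZeroFInverse star)
    (e f : S) (he : IsIdemE star e) (he0 : e ≠ 0) :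
    (∃ s : S, s ≠ 0 ∧ star s * s = e ∧ s * star s = f) ↔
    (∃ m : S, IsMaxNonzero star m ∧ natLe star e (star m * m) ∧ m * e * star m = f) := by
  have he' := hinv.isIdemE_iff.1 he
  have hle_iff (m : S) : natLe star e (star m * m) ↔ e * (star m * m) = e :=
    hinv.natLe_iff_mul_eq_self he' (hinv.isIdempotentElem_star_mul m)
  constructor
  · rintro ⟨s, hs0, hse, hsf⟩
    obtain ⟨m, ⟨hm, hsm⟩, -⟩ := hF s hs0
    obtain rfl : s = m * e := by rw [← hse]; exact hinv.eq_mul_star_mul_of_natLe hsm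
    refine ⟨m, hm, (hle_iff m).2 ?_, ?_⟩
    · rw [← hinv.star_mul_self_mul_idem m he', hse]
    · rw [← hinv.mul_idem_mul_star_self m he', hsf]
  · rintro ⟨m, -, hle, rfl⟩
    have hs : star (m * e) * (m * e) = e := by
      rw [hinv.star_mul_self_mul_idem m he', (hle_iff m).1 hle]
    refine ⟨m * e, fun h => he0 ?_, hs, hinv.mul_idem_mul_star_self m he'⟩
    rw [← hs, h, mul_zero]

/-- in a `0`-`F`-inverse semigroup, for nonzero idempotents `e, f` there is
a nonzero `s` with `s* s = e` and `s s* = f` iff there is a maximal element `m` of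
`(S^×, ≤)` with `e ≤ m* m` and `m e m* = f`. -/
theorem stmt9 {S : Type*} [SemigroupWithZero S] (star : S → S)
    (hinv : IsInvSemigroup S star) (hF : ZeroFInverse star)
    (e f : S) (he : IsIdemE star e) (hf : IsIdemE star f) (he0 : e ≠ 0) (hf0 : f ≠ 0) :
    (∃ s : S, s ≠ 0 ∧ star s * s = e ∧ s * star s = f) ↔
    (∃ m : S, IsMaxNonzero star m ∧ natLe star e (star m * m) ∧ m * e * star m = f) :=
  stmt9_general star hinv hF e f he he0
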